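/- Unimodality of the rank sizes of B_n/C_n: let N(n,k) denote the number of necklaces of length n with exactly k ones. If 2(k+1) ≤ n then N(n,k) ≤ N(n,k+1), and if 2k ≥ n and k + 1 ≤ n then N(n,k) ≥ N(n,k+1); hence the sequence N(n,0), N(n,1), …, N(n,n) is unimodal. -/

import Mathlib

/-!
Common definitions: binary words of length `n`, rotations, necklaces (the quotient
poset `Bₙ/Cₙ`), the cyclic matching procedure, Lyndon words, the map `φ`,
crossing pairs, and the words `w_t`.

Throughout, a binary word of length `n` is a function `Fin n → Bool`, where `true`
encodes the letter `1` and `false` the letter `0`.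
-/

/-- A binary word of length `n`: `true` encodes the letter `1`, `false` the letter `0`. -/
abbrev Word (n : ℕ) := Fin n → Bool

variable {n : ℕ} [NeZero n]

/-- The rotation `σ_i`, shifting the letters of `w` cyclically by `i` positions (so the
letter at position `j` of `w` appears at position `j + i` of `rot i w`). -/
def rot (i : Fin n) (w : Word n) : Word n := fun j => w (j - i)

lemma rot_rot (i j : Fin n) (w : Word n) : rot i (rot j w) = rot (j + i) w := by
  funext k
  simp [rot, sub_sub, add_comm]

/-- Two words are equivalent when one is a cyclic rotation of the other. -/
def rotSetoid (n : ℕ) [NeZero n] : Setoid (Word n) where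
  r w w' := ∃ i : Fin n, rot i w = w'
  iseqv := by
    refine ⟨fun w => ⟨0, ?_⟩, ?_, ?_⟩
    · funext j; simp [rot]
    · rintro w w' ⟨i, rfl⟩
      refine ⟨-i, ?_⟩
      rw [rot_rot]
      funext j; simp [rot]
    · rintro w w' w'' ⟨i, rfl⟩ ⟨j, rfl⟩
      exact ⟨i + j, (rot_rot j i w).symm⟩

/-- A necklace: an equivalence class of binary words under cyclic rotation. -/
abbrev Necklace (n : ℕ) [NeZero n] := Quotient (rotSetoid n)

/-- The necklace of a word. -/
def nec (w : Word n) : Necklace n := Quotient.mk (rotSetoid n) w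

/-- The number of `1`s in a word. -/
def wt (w : Word n) : ℕ := (Finset.univ.filter fun i => w i = true).card

/-- The number of `0`s in a word. -/
def zeros (w : Word n) : ℕ := (Finset.univ.filter fun i => w i = false).card

/-- The rank of a necklace: the number of `1`s in any representative. -/
noncomputable def rank (u : Necklace n) : ℕ := wt (Quotient.out u)

/-- The set of positions belonging to some pair of `M`. -/
def matchedPos (M : Finset (Fin n × Fin n)) : Finset (Fin n) :=
  M.image Prod.fst ∪ M.image Prod.snd

/-- `j` is the first position outside `S` encountered strictly after `i` in the cyclic
order `i+1, i+2, …` (indices mod `n`). -/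
def FirstAfter (S : Finset (Fin n)) (i j : Fin n) : Prop :=
  j ∉ S ∧ j ≠ i ∧ ∀ k : Fin n, k ∉ S → k ≠ i → (j - i).val ≤ (k - i).val

/-- One step of the cyclic matching procedure on the word `w`: choose an as-yet-unmatched
position `i` carrying the letter `0` such that the first as-yet-unmatched position `j`
after `i` in cyclic order carries the letter `1`, and declare `{i, j}` a matched pair
(recorded as the ordered pair `(i, j)`, the `0`-position first). -/
inductive MatchStep (w : Word n) :
    Finset (Fin n × Fin n) → Finset (Fin n × Fin n) → Prop
  | step {M : Finset (Fin n × Fin n)} {i j : Fin n}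
      (hi : i ∉ matchedPos M) (hw : w i = false)
      (hj : FirstAfter (matchedPos M) i j) (hj1 : w j = true) :
      MatchStep w M (insert (i, j) M)

/-- A maximal execution of the cyclic matching procedure on `w`, starting from the empty
matching: `M` is reachable from `∅` by matching steps and no further step is possible. -/
def IsMaximalMatching (w : Word n) (M : Finset (Fin n × Fin n)) : Prop :=
  Relation.ReflTransGen (MatchStep w) ∅ M ∧ ∀ M', ¬ MatchStep w M M'

/-- The cyclic matching of `w`: the set of matched pairs produced by (any) maximal
execution of the cyclic matching procedure. -/
noncomputable def matching (w : Word n) : Finset (Fin n × Fin n) :=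
  letI := Classical.dec (∃ M, IsMaximalMatching w M)
  if h : ∃ M, IsMaximalMatching w M then h.choose else ∅

/-- The unmatched positions of `w`: positions belonging to no matched pair. -/
noncomputable def unmatchedPos (w : Word n) : Finset (Fin n) :=
  Finset.univ \ matchedPos (matching w)

/-- Lexicographic comparison of words with respect to the letter order `1 ≺ 0`
(recall `true` encodes `1` and `false` encodes `0`). -/
def lexLE (w w' : Word n) : Prop :=
  w = w' ∨ ∃ i : Fin n, (∀ j : Fin n, j < i → w j = w' j) ∧ w i = true ∧ w' i = false

/-- A word is Lyndon if it is lexicographically smallest among all of its rotations,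
with respect to the letter order `1 ≺ 0`. -/
def IsLyndon (w : Word n) : Prop := ∀ i : Fin n, lexLE w (rot i w)

/-- The Lyndon rearrangement of `w`: its lexicographically smallest rotation. -/
noncomputable def lyndonOf (w : Word n) : Word n :=
  letI := Classical.dec (∃ i : Fin n, IsLyndon (rot i w))
  if h : ∃ i : Fin n, IsLyndon (rot i w) then rot h.choose w else w

/-- Change the letter at the rightmost unmatched position of `w` to `0`. -/
noncomputable def flipTop (w : Word n) : Word n :=
  if h : (unmatchedPos w).Nonempty then
    Function.update w ((unmatchedPos w).max' h) false
  else w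

/-- The map `φ`: take the Lyndon rearrangement of a representative and change the letter
at its rightmost unmatched position (which carries a `1` on the upper half of ranks)
to `0`. -/
noncomputable def phi (u : Necklace n) : Necklace n :=
  nec (flipTop (lyndonOf (Quotient.out u)))

/-- `x` lies strictly inside the cyclic arc running from `i` (exclusive) to `k`
(exclusive), in the cyclic order of positions. -/
def StrictBtw (i x k : Fin n) : Prop :=
  0 < (x - i).val ∧ (x - i).val < (k - i).val

/-- The pairs `{i, k}` and `{j, l}` cross: exactly one of `j, l` lies strictly inside one
of the two cyclic arcs determined by `i` and `k`. -/
def Crosses (i k j l : Fin n) : Prop := Xor' (StrictBtw i j k) (StrictBtw i l k)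

/-- `wT w t` is the word obtained from `w` by changing the letters at the last `t`
unmatched positions of `w` to `0`; that is, if the unmatched positions of `w` are
`p₁ < … < p_m`, the positions `p_{m-t+1}, …, p_m` are changed to `0`. -/
noncomputable def wT (w : Word n) (t : ℕ) : Word n := fun j =>
  if j ∈ unmatchedPos w ∧ ((unmatchedPos w).filter fun k => j ≤ k).card ≤ t then false
  else w j

/-- The order on necklaces (the poset `Bₙ/Cₙ`): `u ≤ v` iff there are representatives
`w` of `u` and `w'` of `v` such that every position carrying `1` in `w` also carries `1`
in `w'`. -/
def nle (u v : Necklace n) : Prop :=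
  ∃ w w' : Word n, nec w = u ∧ nec w' = v ∧ ∀ i, w i = true → w' i = true

/-- The strict order on necklaces. -/
def nlt (u v : Necklace n) : Prop := nle u v ∧ u ≠ v

/-- `v` covers `u` in `Bₙ/Cₙ`: `u < v` and there is no `z` with `u < z < v`. -/
def ncovBy (u v : Necklace n) : Prop := nlt u v ∧ ∀ z, nlt u z → ¬ nlt z v

/-- A chain top: a necklace `v` in the upper half of ranks (`2·rank v ≥ n`) which is not
the image under `φ` of any necklace in the strict upper half of ranks. -/
def IsChainTop (v : Necklace n) : Prop :=
  n ≤ 2 * rank v ∧ ∀ u : Necklace n, n < 2 * rank u → phi u ≠ v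

/-- The `φ`-string below the chain top `v`: the necklaces of the words `w_t`,
`0 ≤ t ≤ m`, where `w` is the Lyndon representative of `v` and `m = 2·rank v − n`. -/
noncomputable def chainOf (v : Necklace n) : Set (Necklace n) :=
  { u | ∃ t ≤ 2 * rank v - n, u = nec (wT (lyndonOf (Quotient.out v)) t) }

/-!
A function on words of weight `k` killed by the up operator `U` (sum over the words one
step below) satisfies `0 = ‖Uf‖² = ⟨f, DUf⟩ = ‖Df‖² + (n - 2k)‖f‖²`, because the down
operator `D` is adjoint to `U` and `DU - UD = n - 2·weight`. So `U` is injective on level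
`k` when `2k < n`. As `U` commutes with rotations, it descends to an injective linear
map from functions on necklaces of rank `k` to functions on necklaces of rank `k + 1`,
which compares the two necklace counts. The upper half of the ranks follows by
complementing the letters.
-/

open Finset Function

section UpDown

lemma update_update_of_apply_eq {ι : Type*} [DecidableEq ι] {w : ι → Bool} {i : ι} {b : Bool}
    (h : w i = b) (c : Bool) : update (update w i c) i b = w := by
  rw [update_idem, ← h, update_eq_self]

variable {ι : Type*} [Fintype ι]

lemma card_ones_add_card_zeros (w : ι → Bool) :
    #{i | w i = true} + #{i | w i = false} = Fintype.card ι := by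
  simpa using card_filter_add_card_filter_not (s := univ) (fun i => w i = true)

lemma card_ones_comp_perm (w : ι → Bool) (σ : Equiv.Perm ι) :
    #{i | (w ∘ σ) i = true} = #{i | w i = true} :=
  card_equiv σ (by simp)

variable [DecidableEq ι] {R : Type*} [CommRing R]

noncomputable def upOp : ((ι → Bool) → R) →ₗ[R] ((ι → Bool) → R) where
  toFun f w := ∑ i with w i = true, f (update w i false)
  map_add' f g := by ext w; simp [sum_add_distrib]
  map_smul' c f := by ext w; simp [mul_sum]

noncomputable def downOp : ((ι → Bool) → R) →ₗ[R] ((ι → Bool) → R) where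
  toFun f w := ∑ i with w i = false, f (update w i true)
  map_add' f g := by ext w; simp [sum_add_distrib]
  map_smul' c f := by ext w; simp [mul_sum]

lemma upOp_apply (f : (ι → Bool) → R) (w : ι → Bool) :
    upOp f w = ∑ i with w i = true, f (update w i false) :=
  rfl

lemma downOp_apply (f : (ι → Bool) → R) (w : ι → Bool) :
    downOp f w = ∑ i with w i = false, f (update w i true) :=
  rfl

lemma filter_update_true_eq_insert (w : ι → Bool) (i : ι) :
    ({j | update w i true j = true} : Finset ι) = insert i ({j | w j = true} : Finset ι) := by
  ext j; by_cases hj : j = i <;> simp [update_apply, hj]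

lemma filter_update_false_eq_insert (w : ι → Bool) (i : ι) :
    ({j | update w i false j = false} : Finset ι) = insert i ({j | w j = false} : Finset ι) := by
  ext j; by_cases hj : j = i <;> simp [update_apply, hj]

lemma card_ones_update_false {w : ι → Bool} {i : ι} (h : w i = true) :
    #{j | update w i false j = true} + 1 = #{j | w j = true} := by
  have hrest : ({j | update w i false j = true} : Finset ι) = erase {j | w j = true} i := by
    ext j; by_cases hj : j = i <;> simp [update_apply, hj]
  rw [hrest, card_erase_add_one (by simpa using h)]

lemma sum_upOp_mul (f g : (ι → Bool) → R) :
    ∑ w, upOp f w * g w = ∑ w, f w * downOp g w := by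
  simp only [upOp_apply, downOp_apply, sum_mul, mul_sum, sum_filter, ite_mul, mul_ite, zero_mul,
    mul_zero]
  rw [← Fintype.sum_prod_type', ← Fintype.sum_prod_type', ← sum_filter, ← sum_filter]
  refine sum_nbij' (fun x => (update x.1 x.2 false, x.2)) (fun x => (update x.1 x.2 true, x.2))
    ?_ ?_ ?_ ?_ ?_ <;> simp +contextual only [mem_filter, mem_univ, true_and, update_self,
      update_update_of_apply_eq, Prod.mk.eta, implies_true]

lemma downOp_upOp_sub_upOp_downOp (f : (ι → Bool) → R) (w : ι → Bool) :
    downOp (upOp f) w - upOp (downOp f) w =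
      (Fintype.card ι - 2 * #{i | w i = true} : R) * f w := by
  have hDU : downOp (upOp f) w = ∑ i with w i = false,
      (f w + ∑ j with w j = true, f (update (update w i true) j false)) := by
    refine sum_congr rfl fun i hi => ?_
    rw [upOp_apply, filter_update_true_eq_insert, sum_insert (by simp_all),
      update_update_of_apply_eq (by simp_all)]
  have hUD : upOp (downOp f) w = ∑ j with w j = true,
      (f w + ∑ i with w i = false, f (update (update w j false) i true)) := by
    refine sum_congr rfl fun j hj => ?_
    rw [downOp_apply, filter_update_false_eq_insert, sum_insert (by simp_all),
      update_update_of_apply_eq (by simp_all)]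
  have hcross : ∑ i with w i = false, ∑ j with w j = true, f (update (update w i true) j false) =
      ∑ j with w j = true, ∑ i with w i = false, f (update (update w j false) i true) := by
    rw [sum_comm]
    refine sum_congr rfl fun j hj => sum_congr rfl fun i hi => ?_
    rw [update_comm (by rintro rfl; simp_all)]
  have hcard : (#{i | w i = false} : R) = Fintype.card ι - #{i | w i = true} := by
    rw [← card_ones_add_card_zeros w]; push_cast; ring
  rw [hDU, hUD, sum_add_distrib, sum_add_distrib, hcross, sum_const, sum_const, nsmul_eq_mul,
    nsmul_eq_mul, hcard]
  ring

lemma upOp_comp_perm (f : (ι → Bool) → R) (σ : Equiv.Perm ι) (w : ι → Bool) :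
    upOp f (w ∘ σ) = upOp (fun v => f (v ∘ σ)) w :=
  sum_equiv σ (by simp) fun j _ => by simp [update_comp_equiv]

lemma upOp_eq_zero_of_card_ne {k : ℕ} {f : (ι → Bool) → R}
    (hf : ∀ v, #{i | v i = true} ≠ k → f v = 0) {w : ι → Bool}
    (hw : #{i | w i = true} ≠ k + 1) : upOp f w = 0 :=
  sum_eq_zero fun i hi =>
    hf _ fun h => hw (by rw [← card_ones_update_false (by simpa using hi), h])

theorem eq_zero_of_upOp_eq_zero [LinearOrder R] [IsStrictOrderedRing R] {k : ℕ}
    (hk : 2 * k < Fintype.card ι) {f : (ι → Bool) → R}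
    (hf : ∀ w, #{i | w i = true} ≠ k → f w = 0) (hU : upOp f = 0) :
    f = 0 := by
  have hcomm : ∀ w, f w * downOp (upOp f) w =
      upOp (downOp f) w * f w + (Fintype.card ι - 2 * k) * (f w * f w) := by
    intro w
    by_cases hw : #{i | w i = true} = k
    · have h := downOp_upOp_sub_upOp_downOp f w
      rw [hw] at h
      linear_combination f w * h
    · simp [hf w hw]
  have hnorm : 0 = ∑ w, downOp f w * downOp f w +
      (Fintype.card ι - 2 * k) * ∑ w, f w * f w := by
    have h := sum_congr rfl fun w (_ : w ∈ univ) => hcomm w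
    rw [sum_add_distrib, ← mul_sum, ← sum_upOp_mul, sum_upOp_mul (downOp f), hU] at h
    simpa only [Pi.zero_apply, zero_mul, sum_const_zero] using h
  have hpos : (0 : R) < Fintype.card ι - 2 * k := by
    rw [sub_pos]; exact_mod_cast hk
  have hzero : ∑ w, f w * f w = 0 := by
    have hD := sum_nonneg fun w (_ : w ∈ univ) => mul_self_nonneg (downOp f w)
    have hf2 := sum_nonneg fun w (_ : w ∈ univ) => mul_self_nonneg (f w)
    nlinarith
  funext w
  exact (sum_mul_self_eq_zero_iff univ f).1 hzero w (mem_univ w)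

end UpDown

section Necklace

lemma rot_eq_comp (i : Fin n) (w : Word n) : rot i w = w ∘ Equiv.subRight i := rfl

lemma wt_rot (i : Fin n) (w : Word n) : wt (rot i w) = wt w :=
  card_ones_comp_perm w (Equiv.subRight i)

lemma nec_rot (i : Fin n) (w : Word n) : nec (rot i w) = nec w :=
  (Quotient.sound (show (rotSetoid n).r w (rot i w) from ⟨i, rfl⟩)).symm

lemma rank_nec (w : Word n) : rank (nec w) = wt w := by
  obtain ⟨i, hi⟩ := Quotient.exact (nec w).out_eq
  rw [rank, ← wt_rot i, hi]

lemma upOp_rot {R : Type*} [CommRing R] {f : Word n → R} (hf : ∀ i v, f (rot i v) = f v)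
    (i : Fin n) (w : Word n) : upOp f (rot i w) = upOp f w := by
  rw [rot_eq_comp, upOp_comp_perm]
  exact congrArg (upOp · w) (funext (hf i))

noncomputable def liftRank (k : ℕ) :
    ({u : Necklace n // rank u = k} → ℚ) →ₗ[ℚ] (Word n → ℚ) where
  toFun f w := if h : wt w = k then f ⟨nec w, by rwa [rank_nec]⟩ else 0
  map_add' f g := by funext w; by_cases h : wt w = k <;> simp [h]
  map_smul' c f := by funext w; by_cases h : wt w = k <;> simp [h]

lemma liftRank_of_wt_ne {k : ℕ} (f : {u : Necklace n // rank u = k} → ℚ) {w : Word n}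
    (h : wt w ≠ k) : liftRank k f w = 0 :=
  dif_neg h

lemma liftRank_rot {k : ℕ} (f : {u : Necklace n // rank u = k} → ℚ) (i : Fin n) (w : Word n) :
    liftRank k f (rot i w) = liftRank k f w := by
  simp only [liftRank, LinearMap.coe_mk, AddHom.coe_mk, wt_rot, nec_rot]

lemma liftRank_out {k : ℕ} (f : {u : Necklace n // rank u = k} → ℚ)
    (u : {u : Necklace n // rank u = k}) : liftRank k f u.1.out = f u := by
  simp only [liftRank, LinearMap.coe_mk, AddHom.coe_mk, dif_pos (show wt u.1.out = k from u.2)]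
  exact congrArg f (Subtype.ext u.1.out_eq)

theorem card_rank_le_card_rank_succ {k : ℕ} (hk : 2 * k < n) :
    Nat.card {u : Necklace n // rank u = k} ≤ Nat.card {u : Necklace n // rank u = k + 1} := by
  let Φ := LinearMap.funLeft ℚ ℚ (fun v : {u : Necklace n // rank u = k + 1} => v.1.out) ∘ₗ
    upOp ∘ₗ liftRank k
  have hinj : Function.Injective Φ := by
    rw [← LinearMap.ker_eq_bot, LinearMap.ker_eq_bot']
    intro f hf
    have hsupp : ∀ v, wt v ≠ k → liftRank k f v = 0 := fun v => liftRank_of_wt_ne f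
    have hup : upOp (liftRank k f) = 0 := by
      funext w
      by_cases hw : wt w = k + 1
      · obtain ⟨i, hi⟩ := Quotient.exact (nec w).out_eq
        rw [← hi, upOp_rot (liftRank_rot f)]
        exact congrFun hf ⟨nec w, by rwa [rank_nec]⟩
      · exact upOp_eq_zero_of_card_ne hsupp hw
    have hlift := eq_zero_of_upOp_eq_zero (by simpa using hk) hsupp hup
    funext u
    rw [← liftRank_out f u, hlift]
    rfl
  have := Fintype.ofFinite {u : Necklace n // rank u = k}
  have := Fintype.ofFinite {u : Necklace n // rank u = k + 1}
  simpa only [Module.finrank_fintype_fun_eq_card, Nat.card_eq_fintype_card] using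
    LinearMap.finrank_le_finrank_of_injective hinj

lemma rank_le_length (u : Necklace n) : rank u ≤ n :=
  (card_filter_le _ _).trans (card_fin n).le

def complNec : Necklace n → Necklace n :=
  Quotient.map (fun w i => !w i) (by rintro w _ ⟨i, rfl⟩; exact ⟨i, rfl⟩)

lemma complNec_involutive : Involutive (complNec (n := n)) := by
  rintro ⟨w⟩
  exact congrArg nec (funext fun i => Bool.not_not (w i))

lemma rank_complNec (u : Necklace n) : rank (complNec u) = n - rank u := by
  induction u using Quotient.inductionOn with
  | h w =>
    have h := card_ones_add_card_zeros w
    rw [Fintype.card_fin] at h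
    change rank (nec _) = n - rank (nec w)
    simp only [rank_nec, wt, Bool.not_eq_eq_eq_not, Bool.not_true]
    omega

lemma card_rank_eq_card_rank_sub {a : ℕ} (ha : a ≤ n) :
    Nat.card {u : Necklace n // rank u = a} = Nat.card {u : Necklace n // rank u = n - a} :=
  Nat.card_congr <| complNec_involutive.toPerm.subtypeEquiv fun u => by
    have := rank_le_length u
    simp only [Involutive.coe_toPerm, rank_complNec]
    omega

theorem card_rank_succ_le_card_rank {k : ℕ} (hk : n ≤ 2 * k + 1) (hkn : k + 1 ≤ n) :
    Nat.card {u : Necklace n // rank u = k + 1} ≤ Nat.card {u : Necklace n // rank u = k} := by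
  have h := card_rank_le_card_rank_succ (n := n) (k := n - (k + 1)) (by omega)
  rwa [show n - (k + 1) + 1 = n - k by omega, ← card_rank_eq_card_rank_sub hkn,
    ← card_rank_eq_card_rank_sub (by omega)] at h

end Necklace

/-- Unimodality of the rank sizes of `Bₙ/Cₙ`: writing `N k` for the
number of necklaces of length `n` with exactly `k` ones, if `2(k+1) ≤ n` then
`N k ≤ N (k+1)`, and if `2k ≥ n` and `k+1 ≤ n` then `N k ≥ N (k+1)`; hence the sequence
`N 0, N 1, …, N n` is unimodal. -/
theorem necklace_rank_unimodal (n : ℕ) [NeZero n] (k : ℕ) :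
    (2 * (k + 1) ≤ n →
      Nat.card {u : Necklace n // rank u = k} ≤
        Nat.card {u : Necklace n // rank u = k + 1}) ∧
    (n ≤ 2 * k → k + 1 ≤ n →
      Nat.card {u : Necklace n // rank u = k + 1} ≤
        Nat.card {u : Necklace n // rank u = k}) :=
  ⟨fun h => card_rank_le_card_rank_succ (by omega),
    fun h hkn => card_rank_succ_le_card_rank (by omega) hkn⟩
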